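/- Let P(λ) = ∑_{k=0}^d λ^k P_k be a regular n×n matrix polynomial over a field F with even degree d = 2t (t ≥ 2) and invertible leading coefficient P_d, set Q(λ) := ∑_{k=0}^{d−1} λ^k P_k, and let λB+A be a pencil of size (t+1)n×(t+1)n with blocks M_{11}(λ) = −P_d, M_{12}(λ), M_{21}(λ), M_{22}(λ) satisfying M_{12}(λ)(Λ_{t−1}(λ)⊗I_n) = λ^t P_d, (Λ_{t−1}(λ)^T⊗I_n)M_{21}(λ) = λ^t P_d, and (Λ_{t−1}(λ)^T⊗I_n)M_{22}(λ)(Λ_{t−1}(λ)⊗I_n) = Q(λ). Let L(λ) be the associated modified block Kronecker pencil with parameter σ ∈ {1,−1}. Then for every λ0 ∈ F, every vector z ∈ F^{2tn} with L(λ0)z = 0 has the form z = [Λ_t(λ0)⊗I_n ; N̂_t(λ0)(λ0·B+A)(Λ_t(λ0)⊗I_n)]·x for some x ∈ F^n with P(λ0)x = 0. -/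

import Mathlib

open Polynomial Matrix
open scoped Kronecker

noncomputable section

/-- Entrywise inclusion of a constant matrix into polynomial matrices. -/
def matC {F : Type} [Field F] {m l : Type*} (M : Matrix m l F) : Matrix m l (Polynomial F) :=
  M.map fun a => (C a : Polynomial F)

/-- The pencil `λ ↦ A + λ B`, represented as a matrix over `F[λ]`. -/
def pencil {F : Type} [Field F] {m l : Type*} (A B : Matrix m l F) :
    Matrix m l (Polynomial F) :=
  matC A + (X : Polynomial F) • matC B

/-- Grade-`g` reversal `rev_g`, applied entrywise. -/
def revMat {F : Type} [Field F] {m l : Type*} (g : ℕ) (M : Matrix m l (Polynomial F)) :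
    Matrix m l (Polynomial F) :=
  M.map fun q => q.reflect g

/-- Entrywise evaluation of a polynomial matrix at a point. -/
def evalMat {F : Type} [Field F] {m l : Type*} (a : F) (M : Matrix m l (Polynomial F)) :
    Matrix m l F :=
  M.map fun q => q.eval a

/-- The matrix polynomial `P(λ) = ∑_{k=0}^d λ^k P_k` built from its coefficients. -/
def polyOfCoeffs {F : Type} [Field F] {n : ℕ} (d : ℕ) (Pc : ℕ → Matrix (Fin n) (Fin n) F) :
    Matrix (Fin n) (Fin n) (Polynomial F) :=
  ∑ k ∈ Finset.range (d + 1), (X : Polynomial F) ^ k • matC (Pc k)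

/-- The `(i,j)` block of a block-partitioned matrix. -/
def blk {α p q n m : Type*} (A : Matrix (p × n) (q × m) α) (i : p) (j : q) :
    Matrix n m α :=
  Matrix.of fun r c => A (i, r) (j, c)

/-- `Λ_s(λ) ⊗ I_n`, an `(s+1)n × n` polynomial matrix whose `i`-th block is `λ^{s-i} I_n`. -/
def Lam (F : Type) [Field F] (s n : ℕ) :
    Matrix (Fin (s+1) × Fin n) (Fin n) (Polynomial F) :=
  Matrix.of fun p c => if p.2 = c then (X : Polynomial F) ^ (s - (p.1 : ℕ)) else 0

/-- The pencil `L_s(λ) ∈ F[λ]^{s×(s+1)}` with `-1` on the diagonal and `λ` on the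
superdiagonal. -/
def Lpen (F : Type) [Field F] (s : ℕ) : Matrix (Fin s) (Fin (s+1)) (Polynomial F) :=
  Matrix.of fun i j =>
    if (j : ℕ) = (i : ℕ) then -1 else if (j : ℕ) = (i : ℕ) + 1 then X else 0

/-- The block Kronecker pencil `[[λB+A, L_s(λ)ᵀ⊗I_n],[σ L_s(λ)⊗I_n, 0]]` associated with a
pencil `M = λB+A` of size `(s+1)n × (s+1)n`. -/
def blockKron (F : Type) [Field F] (s n : ℕ) (σ : F)
    (M : Matrix (Fin (s+1) × Fin n) (Fin (s+1) × Fin n) (Polynomial F)) :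
    Matrix ((Fin (s+1) × Fin n) ⊕ (Fin s × Fin n)) ((Fin (s+1) × Fin n) ⊕ (Fin s × Fin n))
      (Polynomial F) :=
  Matrix.fromBlocks M (Lpen F s ⊗ₖ (1 : Matrix (Fin n) (Fin n) (Polynomial F)))ᵀ
    (σ • (Lpen F s ⊗ₖ (1 : Matrix (Fin n) (Fin n) (Polynomial F)))) 0

/-- `L` is a linearization of `P`: there are unimodular `U`, `V` with
`U L V = diag(I_m, P)` (up to the fixed identification of index sets). -/
def IsLinearization {F : Type} [Field F] (m : ℕ) {ι ρ : Type*} [Fintype ι] [DecidableEq ι]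
    [Fintype ρ] [DecidableEq ρ] (L : Matrix ι ι (Polynomial F))
    (P : Matrix ρ ρ (Polynomial F)) : Prop :=
  ∃ (e : (Fin m ⊕ ρ) ≃ ι) (U V : Matrix ι ι (Polynomial F)),
    IsUnit U.det ∧ IsUnit V.det ∧
      U * L * V =
        (Matrix.fromBlocks (1 : Matrix (Fin m) (Fin m) (Polynomial F)) 0 0 P).submatrix
          e.symm e.symm

/-- The block conditions `∑_{i+j=d+2-k} B_{ij} + ∑_{i+j=d+1-k} A_{ij} = P_k` for
`k = 0,…,d` (blocks are indexed here `0`-based, so `i+j` `1`-based is `i+j+2` `0`-based). -/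
def blockConds {F : Type} [Field F] {s n : ℕ} (d : ℕ) (Pc : ℕ → Matrix (Fin n) (Fin n) F)
    (A B : Matrix (Fin (s+1) × Fin n) (Fin (s+1) × Fin n) F) : Prop :=
  ∀ k, k ≤ d →
    (∑ p ∈ Finset.univ.filter
        (fun p : Fin (s+1) × Fin (s+1) => (p.1 : ℕ) + (p.2 : ℕ) + 2 + k = d + 2),
        blk B p.1 p.2) +
      (∑ p ∈ Finset.univ.filter
        (fun p : Fin (s+1) × Fin (s+1) => (p.1 : ℕ) + (p.2 : ℕ) + 2 + k = d + 1),
        blk A p.1 p.2) = Pc k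

/-- `L̂_t(λ) ⊗ I_n` (with `t = u+1`): first block column zero, remaining block columns
`L_{t-1}(λ) ⊗ I_n`; the column index is split as `Fin n ⊕ (Fin t × Fin n)`. -/
def LhatB (F : Type) [Field F] (u n : ℕ) :
    Matrix (Fin u × Fin n) (Fin n ⊕ Fin (u+1) × Fin n) (Polynomial F) :=
  Matrix.of fun p q =>
    match q with
    | Sum.inl _ => 0
    | Sum.inr c => (Lpen F u ⊗ₖ (1 : Matrix (Fin n) (Fin n) (Polynomial F))) p c

/-- The modified block Kronecker pencil `[[λB+A, L̂_t(λ)ᵀ⊗I_n],[σ L̂_t(λ)⊗I_n, 0]]`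
(with `t = u+1`). -/
def modBK (F : Type) [Field F] (u n : ℕ) (σ : F)
    (M : Matrix (Fin n ⊕ Fin (u+1) × Fin n) (Fin n ⊕ Fin (u+1) × Fin n) (Polynomial F)) :
    Matrix ((Fin n ⊕ Fin (u+1) × Fin n) ⊕ Fin u × Fin n)
      ((Fin n ⊕ Fin (u+1) × Fin n) ⊕ Fin u × Fin n) (Polynomial F) :=
  Matrix.fromBlocks M (LhatB F u n)ᵀ (σ • LhatB F u n) 0

/-- `Λ̂_t(λ) ⊗ I_n` (with `t = u+1`): the `(t+1)n × 2n` polynomial matrix whose transpose has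
block rows `(I_n, 0, …, 0)` and `(0, λ^{t-1}I_n, …, λ I_n, I_n)`. -/
def LamHatB (F : Type) [Field F] (u n : ℕ) :
    Matrix (Fin n ⊕ Fin (u+1) × Fin n) (Fin 2 × Fin n) (Polynomial F) :=
  Matrix.of fun q c =>
    match q with
    | Sum.inl r => if c.1 = 0 ∧ c.2 = r then 1 else 0
    | Sum.inr p => if c.1 = 1 ∧ c.2 = p.2 then (X : Polynomial F) ^ (u - (p.1 : ℕ)) else 0

/-- `Λ̃_t(λ) ⊗ I_n` (with `t = u+1`): the `(t+1)n × 2n` polynomial matrix whose transpose has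
block rows `(I_n, 0, …, 0)` and `(0, I_n, λ I_n, …, λ^{t-1} I_n)`. -/
def LamTildeB (F : Type) [Field F] (u n : ℕ) :
    Matrix (Fin n ⊕ Fin (u+1) × Fin n) (Fin 2 × Fin n) (Polynomial F) :=
  Matrix.of fun q c =>
    match q with
    | Sum.inl r => if c.1 = 0 ∧ c.2 = r then 1 else 0
    | Sum.inr p => if c.1 = 1 ∧ c.2 = p.2 then (X : Polynomial F) ^ (p.1 : ℕ) else 0

/-- A `2n × 2n` matrix assembled from four `n × n` blocks, indexed by `Fin 2 × Fin n`. -/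
def twoBlock {α : Type*} {n : ℕ} (W₁₁ W₁₂ W₂₁ W₂₂ : Matrix (Fin n) (Fin n) α) :
    Matrix (Fin 2 × Fin n) (Fin 2 × Fin n) α :=
  Matrix.of fun p q =>
    if p.1 = 0 then (if q.1 = 0 then W₁₁ p.2 q.2 else W₁₂ p.2 q.2)
    else (if q.1 = 0 then W₂₁ p.2 q.2 else W₂₂ p.2 q.2)

/-- `Λ_t(λ) ⊗ I_n` (with `t = u+1`), over the split row index `Fin n ⊕ (Fin t × Fin n)`:
block entries `λ^t I_n, λ^{t-1} I_n, …, λ I_n, I_n`. -/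
def LamFullB (F : Type) [Field F] (u n : ℕ) :
    Matrix (Fin n ⊕ Fin (u+1) × Fin n) (Fin n) (Polynomial F) :=
  Matrix.of fun q c =>
    match q with
    | Sum.inl r => if r = c then (X : Polynomial F) ^ (u + 1) else 0
    | Sum.inr p => if p.2 = c then (X : Polynomial F) ^ (u - (p.1 : ℕ)) else 0

/-- `N̂_t(λ) = Ĥ_t(λ) ⊗ I_n` (with `t = u+1`): `Ĥ_t ∈ F[λ]^{(t-1)×(t+1)}` has `(i,j)` entry
`λ^{i+1-j}` if `2 ≤ j ≤ i+1` and `0` otherwise. -/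
def NhatB (F : Type) [Field F] (u n : ℕ) :
    Matrix (Fin u × Fin n) (Fin n ⊕ Fin (u+1) × Fin n) (Polynomial F) :=
  Matrix.of fun p q =>
    match q with
    | Sum.inl _ => 0
    | Sum.inr c =>
        if (c.1 : ℕ) ≤ (p.1 : ℕ) ∧ p.2 = c.2 then
          (X : Polynomial F) ^ ((p.1 : ℕ) - (c.1 : ℕ)) else 0

end

/-!
Write `z = (z₁, z₂)` and `M = λ₀B + A`, so that `L(λ₀) z = 0` says `M z₁ + L̂ᵀ z₂ = 0` and
`L̂ z₁ = 0` (as `σ ≠ 0`). The rows of `L_{t-1}(λ₀)` give the recursion `w_i = λ₀ w_{i+1}` on the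
last `t` blocks of `z₁`, so these blocks are `(Λ_{t-1}(λ₀) ⊗ I_n) x` with `x` the last block.
The block conditions make the first block row of `M (Λ_t(λ₀) ⊗ I_n)` vanish while `M₁₁ = -P_d` is
invertible, so the first block row of `M z₁ + L̂ᵀ z₂ = 0` (where `L̂ᵀ` has a zero first block row)
forces `z₁ = (Λ_t(λ₀) ⊗ I_n) x`. Multiplying `M z₁ + L̂ᵀ z₂ = 0` by `(Λ_t ⊗ I_n)ᵀ` and using
`L̂ (Λ_t ⊗ I_n) = 0` and `(Λ_t ⊗ I_n)ᵀ M (Λ_t ⊗ I_n) = P` gives `P(λ₀) x = 0`; multiplying it by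
`N̂_t` and using `N̂_t L̂_tᵀ = -I` gives `z₂ = N̂_t M z₁`.
-/

section KroneckerBlocks

variable {R : Type*}

lemma kronecker_one_mulVec_apply [Semiring R] {l m n : Type*} [Fintype m] [Fintype n]
    [DecidableEq n] (A : Matrix l m R) (w : m × n → R) (i : l) (r : n) :
    ((A ⊗ₖ (1 : Matrix n n R)) *ᵥ w) (i, r) = (A *ᵥ fun j => w (j, r)) i := by
  simp [mulVec, dotProduct, Fintype.sum_prod_type, kroneckerMap_apply, one_apply]

lemma eq_mulVec_of_toRows₁_mul_eq_zero [Ring R] {m k l : Type*} [Fintype m] [DecidableEq m]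
    [Fintype k] [Fintype l] {M : Matrix (m ⊕ k) (m ⊕ k) R} {V : Matrix (m ⊕ k) l R}
    (hMV : (M * V).toRows₁ = 0) (hM₁₁ : IsUnit M.toBlocks₁₁) {w : m ⊕ k → R} {x : l → R}
    (hw : w ∘ Sum.inr = (V *ᵥ x) ∘ Sum.inr) (hMw : (M *ᵥ w) ∘ Sum.inl = 0) : w = V *ᵥ x := by
  have htop : ∀ v : m ⊕ k → R,
      (M *ᵥ v) ∘ Sum.inl = M.toBlocks₁₁ *ᵥ (v ∘ Sum.inl) + M.toBlocks₁₂ *ᵥ (v ∘ Sum.inr) := by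
    intro v
    conv_lhs => rw [← fromBlocks_toBlocks M, ← Sum.elim_comp_inl_inr v, fromBlocks_mulVec]
    rfl
  have hMVx : (M *ᵥ (V *ᵥ x)) ∘ Sum.inl = 0 := by
    rw [mulVec_mulVec]
    funext i
    change ((M * V).toRows₁ *ᵥ x) i = 0
    rw [hMV, zero_mulVec, Pi.zero_apply]
  have hinl : w ∘ Sum.inl = (V *ᵥ x) ∘ Sum.inl := by
    have hw' := htop w
    have hVx := htop (V *ᵥ x)
    rw [hMw] at hw'
    rw [hMVx, ← hw] at hVx
    have h : M.toBlocks₁₁ *ᵥ (w ∘ Sum.inl) = M.toBlocks₁₁ *ᵥ ((V *ᵥ x) ∘ Sum.inl) :=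
      add_right_cancel (hw'.symm.trans hVx)
    exact mulVec_injective_of_isUnit hM₁₁ h
  rw [← Sum.elim_comp_inl_inr w, hinl, hw, Sum.elim_comp_inl_inr]

end KroneckerBlocks

lemma Fin.eq_pow_mul_last {M : Type*} [Monoid M] {s : ℕ} (b : M) (f : Fin (s+1) → M)
    (h : ∀ i : Fin s, f i.castSucc = b * f i.succ) (j : Fin (s+1)) :
    f j = b ^ (s - (j : ℕ)) * f (Fin.last s) := by
  induction j using Fin.reverseInduction with
  | last => simp
  | cast i ih =>
    rw [h, ih, ← mul_assoc, ← pow_succ', Fin.val_castSucc, Fin.val_succ,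
      show s - ((i : ℕ) + 1) + 1 = s - i by omega]

section PencilsAtAPoint

variable {R : Type*} [CommRing R] {s : ℕ}

/-- `L_s(b)`, i.e. `L_s(λ)` at `λ = b`. -/
def LpenAt (s : ℕ) (b : R) : Matrix (Fin s) (Fin (s+1)) R :=
  Matrix.of fun i j => if (j : ℕ) = (i : ℕ) then -1 else if (j : ℕ) = (i : ℕ) + 1 then b else 0

/-- `Ĥ_{s+1}(b)` with its zero first column removed. -/
def HpenAt (s : ℕ) (b : R) : Matrix (Fin s) (Fin (s+1)) R :=
  Matrix.of fun i j => if (j : ℕ) ≤ (i : ℕ) then b ^ ((i : ℕ) - (j : ℕ)) else 0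

lemma LpenAt_mulVec_apply (b : R) (f : Fin (s+1) → R) (i : Fin s) :
    (LpenAt s b *ᵥ f) i = -f i.castSucc + b * f i.succ := by
  have hterm : ∀ j : Fin (s+1), LpenAt s b i j * f j =
      (if j = i.castSucc then -f j else 0) + (if j = i.succ then b * f j else 0) := by
    intro j
    simp only [LpenAt, of_apply, Fin.ext_iff, Fin.val_castSucc, Fin.val_succ]
    split_ifs <;> first | omega | ring
  simp only [mulVec, dotProduct, hterm, Finset.sum_add_distrib, Finset.sum_ite_eq',
    Finset.mem_univ, if_true]

lemma LpenAt_mulVec_pow (b : R) : LpenAt s b *ᵥ (fun j => b ^ (s - (j : ℕ))) = 0 := by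
  ext i
  rw [LpenAt_mulVec_apply, Fin.val_castSucc, Fin.val_succ, ← pow_succ',
    show s - ((i : ℕ) + 1) + 1 = s - i by omega, neg_add_cancel, Pi.zero_apply]

lemma eq_pow_mul_last_of_LpenAt_mulVec_eq_zero {b : R} {f : Fin (s+1) → R}
    (hf : LpenAt s b *ᵥ f = 0) (j : Fin (s+1)) : f j = b ^ (s - (j : ℕ)) * f (Fin.last s) :=
  Fin.eq_pow_mul_last b f (fun i => neg_add_eq_zero.mp ((LpenAt_mulVec_apply b f i).symm.trans
    (congrFun hf i))) j

lemma HpenAt_mul_LpenAt_transpose (b : R) : HpenAt s b * (LpenAt s b)ᵀ = -1 := by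
  ext i k
  have hrow : (HpenAt s b * (LpenAt s b)ᵀ) i k = (LpenAt s b *ᵥ fun j => HpenAt s b i j) k := by
    simp only [mul_apply, transpose_apply, mulVec, dotProduct, mul_comm]
  rw [hrow, LpenAt_mulVec_apply, Matrix.neg_apply, one_apply]
  simp only [HpenAt, of_apply, Fin.val_castSucc, Fin.val_succ, Fin.ext_iff]
  by_cases hki : (k : ℕ) < i
  · rw [if_pos hki.le, if_pos (Nat.succ_le_of_lt hki), if_neg hki.ne', ← pow_succ',
      show (i : ℕ) - (k + 1) + 1 = i - k by omega]
    simp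
  · rw [if_neg (by omega : ¬ (k : ℕ) + 1 ≤ i), mul_zero, add_zero]
    by_cases hik : (i : ℕ) = k
    · simp [hik]
    · rw [if_neg (by omega), if_neg hik, neg_zero]

end PencilsAtAPoint

section Blocks

variable {F : Type} [Field F] {n u : ℕ}

lemma LhatB_eq_fromCols : LhatB F u n = fromCols 0 (LpenAt u (X : F[X]) ⊗ₖ 1) := by
  ext p (q | q) <;> rfl

lemma NhatB_eq_fromCols : NhatB F u n = fromCols 0 (HpenAt u (X : F[X]) ⊗ₖ 1) := by
  ext p (q | q)
  · rfl
  · simp only [NhatB, HpenAt, of_apply, fromCols_apply_inr, kroneckerMap_apply, one_apply]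
    split_ifs <;> simp_all

lemma LamFullB_eq_fromRows :
    LamFullB F u n = fromRows ((X : F[X]) ^ (u+1) • 1) (Lam F u n) := by
  ext (r | p) c
  · simp [LamFullB, one_apply]
  · rfl

lemma LhatB_mul_LamFullB : LhatB F u n * LamFullB F u n = 0 := by
  rw [LhatB_eq_fromCols, LamFullB_eq_fromRows, fromCols_mul_fromRows, Matrix.zero_mul, zero_add]
  refine Matrix.ext fun ⟨i, r⟩ c => ?_
  change ((LpenAt u X ⊗ₖ 1) *ᵥ fun q => Lam F u n q c) (i, r) = 0
  rw [kronecker_one_mulVec_apply]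
  by_cases hrc : r = c
  · simp [Lam, hrc, LpenAt_mulVec_pow]
  · simp [Lam, hrc, ← Pi.zero_def]

lemma NhatB_mul_LhatB_transpose : NhatB F u n * (LhatB F u n)ᵀ = -1 := by
  rw [NhatB_eq_fromCols, LhatB_eq_fromCols, transpose_fromCols, fromCols_mul_fromRows,
    Matrix.zero_mul, zero_add, ← kroneckerMap_transpose, transpose_one, ← mul_kronecker_mul,
    Matrix.mul_one, HpenAt_mul_LpenAt_transpose, ← neg_one_smul F[X] (1 : Matrix (Fin u) _ _),
    smul_kronecker, one_kronecker_one, neg_one_smul]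

lemma mul_LamFullB (M : Matrix (Fin n ⊕ Fin (u+1) × Fin n) (Fin n ⊕ Fin (u+1) × Fin n) F[X]) :
    M * LamFullB F u n =
      fromRows ((X : F[X]) ^ (u+1) • M.toBlocks₁₁ + M.toBlocks₁₂ * Lam F u n)
        ((X : F[X]) ^ (u+1) • M.toBlocks₂₁ + M.toBlocks₂₂ * Lam F u n) := by
  conv_lhs => rw [← fromBlocks_toBlocks M]
  rw [LamFullB_eq_fromRows, fromBlocks_mul_fromRows]
  simp only [Matrix.mul_smul, Matrix.mul_one]

end Blocks

section BlockConditions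

variable {F : Type} [Field F] {n u : ℕ}
  {M : Matrix (Fin n ⊕ Fin (u+1) × Fin n) (Fin n ⊕ Fin (u+1) × Fin n) F[X]}
  {D Q : Matrix (Fin n) (Fin n) F[X]}

lemma toRows₁_mul_LamFullB (h11 : M.toBlocks₁₁ = -D)
    (h12 : M.toBlocks₁₂ * Lam F u n = (X : F[X]) ^ (u+1) • D) :
    (M * LamFullB F u n).toRows₁ = 0 := by
  rw [mul_LamFullB, toRows₁_fromRows, h11, h12, smul_neg, neg_add_cancel]

lemma LamFullB_transpose_mul_mul_LamFullB (h11 : M.toBlocks₁₁ = -D)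
    (h12 : M.toBlocks₁₂ * Lam F u n = (X : F[X]) ^ (u+1) • D)
    (h21 : (Lam F u n)ᵀ * M.toBlocks₂₁ = (X : F[X]) ^ (u+1) • D)
    (h22 : (Lam F u n)ᵀ * M.toBlocks₂₂ * Lam F u n = Q) :
    (LamFullB F u n)ᵀ * M * LamFullB F u n = (X : F[X]) ^ (2*(u+1)) • D + Q := by
  rw [Matrix.mul_assoc, ← fromRows_toRows (M * LamFullB F u n), toRows₁_mul_LamFullB h11 h12,
    mul_LamFullB, toRows₂_fromRows, LamFullB_eq_fromRows, transpose_fromRows,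
    fromCols_mul_fromRows, Matrix.mul_zero, zero_add, Matrix.mul_add, Matrix.mul_smul, h21,
    ← Matrix.mul_assoc, h22, smul_smul, ← pow_add, two_mul]

end BlockConditions

section Evaluation

variable {F : Type} [Field F] (a : F) {l m k : Type*}

lemma evalMat_mul [Fintype l] (M : Matrix m l F[X]) (N : Matrix l k F[X]) :
    evalMat a (M * N) = evalMat a M * evalMat a N :=
  Matrix.map_mul (f := Polynomial.evalRingHom a)

lemma evalMat_neg (M : Matrix m l F[X]) : evalMat a (-M) = -evalMat a M := by
  ext; simp [evalMat]

lemma evalMat_zero : evalMat a (0 : Matrix m l F[X]) = 0 := by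
  ext; simp [evalMat]

lemma evalMat_one [Fintype m] [DecidableEq m] : evalMat a (1 : Matrix m m F[X]) = 1 := by
  ext; simp [evalMat, one_apply, apply_ite (eval a)]

lemma evalMat_transpose (M : Matrix m l F[X]) : evalMat a Mᵀ = (evalMat a M)ᵀ := rfl

lemma evalMat_matC (M : Matrix m l F) : evalMat a (matC M) = M := by
  ext; simp [evalMat, matC]

lemma evalMat_fromRows (M : Matrix m l F[X]) (N : Matrix k l F[X]) :
    evalMat a (fromRows M N) = fromRows (evalMat a M) (evalMat a N) :=
  fromRows_map M N _

lemma evalMat_modBK {u n : ℕ} (σ : F)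
    (M : Matrix (Fin n ⊕ Fin (u+1) × Fin n) (Fin n ⊕ Fin (u+1) × Fin n) F[X]) :
    evalMat a (modBK F u n σ M) =
      fromBlocks (evalMat a M) (evalMat a (LhatB F u n))ᵀ (σ • evalMat a (LhatB F u n)) 0 := by
  ext (i | i) (j | j) <;> simp [modBK, evalMat]

lemma evalMat_LhatB {u n : ℕ} : evalMat a (LhatB F u n) = fromCols 0 (LpenAt u a ⊗ₖ 1) := by
  ext p (q | q)
  · simp [evalMat, LhatB]
  · simp only [evalMat, LhatB, Lpen, LpenAt, map_apply, of_apply, fromCols_apply_inr,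
      kroneckerMap_apply, one_apply]
    split_ifs <;> simp

lemma evalMat_LamFullB_mulVec {u n : ℕ} (x : Fin n → F) :
    evalMat a (LamFullB F u n) *ᵥ x =
      Sum.elim (a ^ (u+1) • x) (fun p => a ^ (u - (p.1 : ℕ)) * x p.2) := by
  ext (r | p) <;> simp [evalMat, LamFullB, mulVec, dotProduct, apply_ite (eval a), ite_mul]

end Evaluation

section Kernel

variable {F : Type} [Field F] {n u : ℕ} {a : F}
  {M : Matrix (Fin n ⊕ Fin (u+1) × Fin n) (Fin n ⊕ Fin (u+1) × Fin n) F[X]}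
  {z₁ : Fin n ⊕ Fin (u+1) × Fin n → F} {z₂ : Fin u × Fin n → F}

lemma evalMat_modBK_mulVec_eq_zero {σ : F} (hσ : σ ≠ 0)
    {z : (Fin n ⊕ Fin (u+1) × Fin n) ⊕ Fin u × Fin n → F}
    (hz : evalMat a (modBK F u n σ M) *ᵥ z = 0) :
    evalMat a M *ᵥ (z ∘ Sum.inl) + (evalMat a (LhatB F u n))ᵀ *ᵥ (z ∘ Sum.inr) = 0 ∧
      evalMat a (LhatB F u n) *ᵥ (z ∘ Sum.inl) = 0 := by
  rwa [evalMat_modBK, ← Sum.elim_comp_inl_inr z, fromBlocks_mulVec, Sum.elim_comp_inl,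
    Sum.elim_comp_inr, ← Sum.elim_zero_zero, Sum.elim_eq_iff, zero_mulVec, add_zero, smul_mulVec,
    smul_eq_zero_iff_right hσ] at hz

lemma comp_inr_eq_of_evalMat_LhatB_mulVec_eq_zero (hz₁ : evalMat a (LhatB F u n) *ᵥ z₁ = 0) :
    z₁ ∘ Sum.inr =
      (evalMat a (LamFullB F u n) *ᵥ fun r => z₁ (Sum.inr (Fin.last u, r))) ∘ Sum.inr := by
  rw [evalMat_LhatB, fromCols_mulVec, zero_mulVec, zero_add] at hz₁
  funext ⟨j, r⟩
  have hcol : LpenAt u a *ᵥ (fun j => z₁ (Sum.inr (j, r))) = 0 := by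
    funext i
    simpa [kronecker_one_mulVec_apply] using congrFun hz₁ (i, r)
  simp [evalMat_LamFullB_mulVec, eq_pow_mul_last_of_LpenAt_mulVec_eq_zero hcol j]

lemma eq_evalMat_LamFullB_mulVec
    (h₁ : evalMat a M *ᵥ z₁ + (evalMat a (LhatB F u n))ᵀ *ᵥ z₂ = 0)
    (h₂ : evalMat a (LhatB F u n) *ᵥ z₁ = 0) {D : Matrix (Fin n) (Fin n) F} (hD : IsUnit D)
    (h11 : M.toBlocks₁₁ = -matC D) (h12 : M.toBlocks₁₂ * Lam F u n = (X : F[X]) ^ (u+1) • matC D) :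
    z₁ = evalMat a (LamFullB F u n) *ᵥ fun r => z₁ (Sum.inr (Fin.last u, r)) := by
  refine eq_mulVec_of_toRows₁_mul_eq_zero (M := evalMat a M) ?_ ?_
    (comp_inr_eq_of_evalMat_LhatB_mulVec_eq_zero h₂) ?_
  · rw [← evalMat_mul]
    exact (congrArg (evalMat a) (toRows₁_mul_LamFullB h11 h12)).trans (evalMat_zero a)
  · change IsUnit (evalMat a M.toBlocks₁₁)
    rwa [h11, evalMat_neg, evalMat_matC, IsUnit.neg_iff]
  · have hLtop : ((evalMat a (LhatB F u n))ᵀ *ᵥ z₂) ∘ Sum.inl = 0 := by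
      rw [evalMat_LhatB, transpose_fromCols, fromRows_mulVec, Sum.elim_comp_inl,
        transpose_zero, zero_mulVec]
    simpa only [Pi.add_comp, hLtop, add_zero, Pi.zero_comp] using congrArg (· ∘ Sum.inl) h₁

lemma evalMat_LamFullB_transpose_mul_mul_LamFullB_mulVec_eq_zero
    (h₁ : evalMat a M *ᵥ z₁ + (evalMat a (LhatB F u n))ᵀ *ᵥ z₂ = 0) {x : Fin n → F}
    (hz₁ : z₁ = evalMat a (LamFullB F u n) *ᵥ x) :
    evalMat a ((LamFullB F u n)ᵀ * M * LamFullB F u n) *ᵥ x = 0 := by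
  have hLV : evalMat a (LhatB F u n) * evalMat a (LamFullB F u n) = 0 := by
    rw [← evalMat_mul, LhatB_mul_LamFullB, evalMat_zero]
  rw [evalMat_mul, evalMat_mul, evalMat_transpose, ← mulVec_mulVec, ← mulVec_mulVec, ← hz₁,
    eq_neg_of_add_eq_zero_left h₁, mulVec_neg, mulVec_mulVec, ← transpose_mul, hLV,
    transpose_zero, zero_mulVec, neg_zero]

lemma eq_evalMat_NhatB_mul_mulVec
    (h₁ : evalMat a M *ᵥ z₁ + (evalMat a (LhatB F u n))ᵀ *ᵥ z₂ = 0) :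
    z₂ = evalMat a (NhatB F u n * M) *ᵥ z₁ := by
  have hNL : evalMat a (NhatB F u n) * (evalMat a (LhatB F u n))ᵀ = -1 := by
    rw [← evalMat_transpose, ← evalMat_mul, NhatB_mul_LhatB_transpose, evalMat_neg, evalMat_one]
  have h : evalMat a (NhatB F u n * M) *ᵥ z₁ +
      (evalMat a (NhatB F u n) * (evalMat a (LhatB F u n))ᵀ) *ᵥ z₂ = 0 := by
    rw [evalMat_mul, ← mulVec_mulVec, ← mulVec_mulVec, ← mulVec_add, h₁, mulVec_zero]
  rw [hNL, neg_mulVec, one_mulVec] at h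
  exact (add_neg_eq_zero.mp h).symm

end Kernel

theorem stmt_17_general {F : Type} [Field F] (n u : ℕ)
    (Pc : ℕ → Matrix (Fin n) (Fin n) F)
    (hPd : IsUnit (Pc (2*(u+1))).det)
    (σ : F) (hσ : σ = 1 ∨ σ = -1)
    (A B : Matrix (Fin n ⊕ Fin (u+1) × Fin n) (Fin n ⊕ Fin (u+1) × Fin n) F)
    (h11 : (pencil A B).toBlocks₁₁ = -(matC (Pc (2*(u+1)))))
    (h12 : (pencil A B).toBlocks₁₂ * Lam F u n =
      (X : Polynomial F) ^ (u+1) • matC (Pc (2*(u+1))))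
    (h21 : (Lam F u n)ᵀ * (pencil A B).toBlocks₂₁ =
      (X : Polynomial F) ^ (u+1) • matC (Pc (2*(u+1))))
    (h22 : (Lam F u n)ᵀ * (pencil A B).toBlocks₂₂ * Lam F u n =
      ∑ k ∈ Finset.range (2*(u+1)), (X : Polynomial F) ^ k • matC (Pc k)) :
    ∀ lam0 : F, ∀ z : ((Fin n ⊕ Fin (u+1) × Fin n) ⊕ Fin u × Fin n) → F,
      (evalMat lam0 (modBK F u n σ (pencil A B))).mulVec z = 0 →
        ∃ x : Fin n → F,
          (evalMat lam0 (polyOfCoeffs (2*(u+1)) Pc)).mulVec x = 0 ∧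
            z = (evalMat lam0 (Matrix.fromRows (LamFullB F u n)
              (NhatB F u n * pencil A B * LamFullB F u n))).mulVec x := by
  intro a z hz
  obtain ⟨h₁, h₂⟩ :=
    evalMat_modBK_mulVec_eq_zero (by rcases hσ with rfl | rfl <;> norm_num) hz
  set x : Fin n → F := fun r => z (Sum.inl (Sum.inr (Fin.last u, r)))
  have hz₁ : z ∘ Sum.inl = evalMat a (LamFullB F u n) *ᵥ x :=
    eq_evalMat_LamFullB_mulVec h₁ h₂ ((isUnit_iff_isUnit_det _).mpr hPd) h11 h12
  refine ⟨x, ?_, ?_⟩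
  · rw [polyOfCoeffs, Finset.sum_range_succ, add_comm,
      ← LamFullB_transpose_mul_mul_LamFullB h11 h12 h21 h22]
    exact evalMat_LamFullB_transpose_mul_mul_LamFullB_mulVec_eq_zero h₁ hz₁
  · rw [evalMat_fromRows, evalMat_mul, fromRows_mulVec, ← mulVec_mulVec, ← hz₁,
      ← eq_evalMat_NhatB_mul_mulVec h₁, Sum.elim_comp_inl_inr]

/-- (`t = u+1 ≥ 2`, `d = 2t`, `P_d` invertible, `P` regular.) Every
vector in the kernel of `L(λ0)` has the form
`[Λ_t(λ0)⊗I_n ; N̂_t(λ0)(λ0 B+A)(Λ_t(λ0)⊗I_n)]·x` for some `x` with `P(λ0)x = 0`. -/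
theorem stmt_17 {F : Type} [Field F] (n u : ℕ) (hn : 0 < n) (hu : 1 ≤ u)
    (Pc : ℕ → Matrix (Fin n) (Fin n) F)
    (hPd : IsUnit (Pc (2*(u+1))).det)
    (hreg : (polyOfCoeffs (2*(u+1)) Pc).det ≠ 0)
    (σ : F) (hσ : σ = 1 ∨ σ = -1)
    (A B : Matrix (Fin n ⊕ Fin (u+1) × Fin n) (Fin n ⊕ Fin (u+1) × Fin n) F)
    (h11 : (pencil A B).toBlocks₁₁ = -(matC (Pc (2*(u+1)))))
    (h12 : (pencil A B).toBlocks₁₂ * Lam F u n =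
      (X : Polynomial F) ^ (u+1) • matC (Pc (2*(u+1))))
    (h21 : (Lam F u n)ᵀ * (pencil A B).toBlocks₂₁ =
      (X : Polynomial F) ^ (u+1) • matC (Pc (2*(u+1))))
    (h22 : (Lam F u n)ᵀ * (pencil A B).toBlocks₂₂ * Lam F u n =
      ∑ k ∈ Finset.range (2*(u+1)), (X : Polynomial F) ^ k • matC (Pc k)) :
    ∀ lam0 : F, ∀ z : ((Fin n ⊕ Fin (u+1) × Fin n) ⊕ Fin u × Fin n) → F,
      (evalMat lam0 (modBK F u n σ (pencil A B))).mulVec z = 0 →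
        ∃ x : Fin n → F,
          (evalMat lam0 (polyOfCoeffs (2*(u+1)) Pc)).mulVec x = 0 ∧
            z = (evalMat lam0 (Matrix.fromRows (LamFullB F u n)
              (NhatB F u n * pencil A B * LamFullB F u n))).mulVec x :=
  stmt_17_general n u Pc hPd σ hσ A B h11 h12 h21 h22
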